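/- arXiv:math/0410610 — 3 statements merged into one kernel-verified Lean document; each statement's English description precedes it below -/
import Mathlib

section
/- On ℝ⁶ with the standard SU(3)-structure forms, let u(3)^⊥ denote the space of alternating 2-forms β on ℝ⁶ satisfying β(Ix, Iy) = −β(x, y) for all x, y. Then the following three subsets of the space of alternating 4-forms on ℝ⁶ coincide: {μ ∧ ψ₊ : μ an ℝ-linear 1-form}, {μ ∧ ψ₋ : μ an ℝ-linear 1-form}, and {β ∧ ω : β ∈ u(3)^⊥}. -/
open scoped BigOperators

noncomputable section

/-- ℝ⁶ as the space of functions `Fin 6 → ℝ`. -/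
abbrev V6 : Type := Fin 6 → ℝ

/-- The standard inner product on ℝ⁶. -/
def ip6 (x y : V6) : ℝ := ∑ i, x i * y i

/-- The standard orthonormal basis vector `e_i`. -/
def e6 (i : Fin 6) : V6 := fun j => if j = i then 1 else 0

/-- The orthogonal complex structure: `I e_k = e_{k+3}`, `I e_{k+3} = -e_k` (0-indexed). -/
def I6 (x : V6) : V6 := fun j => if (j : ℕ) < 3 then -x (j + 3) else x (j + 3)

/-- The Kähler form `ω(x,y) = ⟨x, I y⟩`. -/
def ω6 (x y : V6) : ℝ := ip6 x (I6 y)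

/-- The basis covector `eⁱ`. -/
def E (i : Fin 6) : V6 → ℝ := fun x => x i

/-- Wedge product of three covectors (determinant convention). -/
def w3 (a b c : V6 → ℝ) (x y z : V6) : ℝ :=
  a x * b y * c z - a x * b z * c y - a y * b x * c z
    + a y * b z * c x + a z * b x * c y - a z * b y * c x

/-- `ψ₊ = e¹∧e²∧e³ − e⁴∧e⁵∧e³ − e⁴∧e²∧e⁶ − e¹∧e⁵∧e⁶` (0-indexed). -/
def ψp (x y z : V6) : ℝ :=
  w3 (E 0) (E 1) (E 2) x y z - w3 (E 3) (E 4) (E 2) x y z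
    - w3 (E 3) (E 1) (E 5) x y z - w3 (E 0) (E 4) (E 5) x y z

/-- `ψ₋ = −e⁴∧e⁵∧e⁶ + e⁴∧e²∧e³ + e¹∧e⁵∧e³ + e¹∧e²∧e⁶` (0-indexed). -/
def ψm (x y z : V6) : ℝ :=
  -w3 (E 3) (E 4) (E 5) x y z + w3 (E 3) (E 1) (E 2) x y z
    + w3 (E 0) (E 4) (E 2) x y z + w3 (E 0) (E 1) (E 5) x y z

/-- `u(3)^⊥`: alternating 2-forms `β` with `β(Ix,Iy) = −β(x,y)`. -/
def u3perp : Set (AlternatingMap ℝ V6 ℝ (Fin 2)) :=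
  {β | ∀ x y : V6, β ![I6 x, I6 y] = -β ![x, y]}

/-- Wedge product of a 1-form and a 3-form, as an alternating 4-form. -/
def w13 (μ : V6 → ℝ) (α : V6 → V6 → V6 → ℝ) (v : Fin 4 → V6) : ℝ :=
  (1 / 6 : ℝ) * ∑ σ : Equiv.Perm (Fin 4),
    ((Equiv.Perm.sign σ : ℤ) : ℝ) *
      (μ (v (σ 0)) * α (v (σ 1)) (v (σ 2)) (v (σ 3)))

/-- Wedge product of two 2-forms, as an alternating 4-form. -/
def w22 (β γ : V6 → V6 → ℝ) (v : Fin 4 → V6) : ℝ :=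
  (1 / 4 : ℝ) * ∑ σ : Equiv.Perm (Fin 4),
    ((Equiv.Perm.sign σ : ℤ) : ℝ) *
      (β (v (σ 0)) (v (σ 1)) * γ (v (σ 2)) (v (σ 3)))


/-!
Every 1-form on ℝ⁶ is `⟨w, ·⟩`. Expanding the wedge products as alternating sums over `S₄`
turns `⟨w, ·⟩ ∧ ψ₊ = ⟨I w, ·⟩ ∧ ψ₋` and `⟨-w, ·⟩ ∧ ψ₋ = ψ₊(w, ·, ·) ∧ ω` into polynomial
identities. The 2-forms `ψ₊(w, ·, ·)` lie in `u(3)^⊥` because `ψ₊(x, I y, I z) = -ψ₊(x, y, z)`,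
and they exhaust it: an element of `u(3)^⊥` is determined by six of its values on pairs of
basis vectors, and `w` can be chosen to match them.
-/

open Equiv

lemma sum_perm_fin_succ {M : Type*} [AddCommMonoid M] {n : ℕ} (f : Perm (Fin (n + 1)) → M) :
    ∑ σ, f σ = ∑ p, ∑ τ : Perm (Fin n), f (Perm.decomposeFin.symm (p, τ)) := by
  rw [← Fintype.sum_prod_type']
  exact (Equiv.sum_comp _ _).symm

lemma sum_sign_mul_fin_four {R : Type*} [CommRing R]
    (g : Fin 4 → Fin 4 → Fin 4 → Fin 4 → R) :
    ∑ σ : Perm (Fin 4), ((Perm.sign σ : ℤ) : R) * g (σ 0) (σ 1) (σ 2) (σ 3) =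
      g 0 1 2 3 - g 0 1 3 2 - g 0 2 1 3 + g 0 2 3 1 + g 0 3 1 2 - g 0 3 2 1
      - g 1 0 2 3 + g 1 0 3 2 + g 1 2 0 3 - g 1 2 3 0 - g 1 3 0 2 + g 1 3 2 0
      + g 2 0 1 3 - g 2 0 3 1 - g 2 1 0 3 + g 2 1 3 0 + g 2 3 0 1 - g 2 3 1 0
      - g 3 0 1 2 + g 3 0 2 1 + g 3 1 0 2 - g 3 1 2 0 - g 3 2 0 1 + g 3 2 1 0 := by
  -- numerals as iterated `Fin.succ`, so that `decomposeFin_symm_apply_succ` applies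
  simp only [show (3 : Fin 4) = (2 : Fin 3).succ from rfl,
    show (2 : Fin 4) = (1 : Fin 3).succ from rfl, show (1 : Fin 4) = (0 : Fin 3).succ from rfl,
    show (2 : Fin 3) = (1 : Fin 2).succ from rfl, show (1 : Fin 3) = (0 : Fin 2).succ from rfl,
    show (1 : Fin 2) = (0 : Fin 1).succ from rfl,
    sum_perm_fin_succ, Fin.sum_univ_succ, Fintype.sum_unique, Perm.decomposeFin.symm_sign,
    Perm.decomposeFin_symm_apply_zero, Perm.decomposeFin_symm_apply_succ]
  simp only [Perm.default_eq, Fin.default_eq_zero, Perm.sign_one, Perm.coe_one, id_eq, refl_apply,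
    swap_self, swap_apply_right, swap_apply_def, Fin.succ_zero_eq_one', Fin.succ_one_eq_two',
    Fin.reduceSucc, Fin.reduceEq, one_ne_zero, ↓reduceIte, Units.val_one, Units.val_neg,
    Int.cast_one, Int.cast_neg, one_mul, mul_one, neg_mul, mul_neg, neg_neg]
  ring

lemma AlternatingMap.map_fin_two_swap {R M N : Type*} [CommRing R] [AddCommGroup M] [Module R M]
    [AddCommGroup N] [Module R N] (β : M [⋀^Fin 2]→ₗ[R] N) (x y : M) :
    β ![y, x] = -β ![x, y] := by
  simpa using β.map_swap ![x, y] zero_ne_one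

lemma AlternatingMap.map_fin_two_neg_left {R M N : Type*} [CommRing R] [AddCommGroup M]
    [Module R M] [AddCommGroup N] [Module R N] (β : M [⋀^Fin 2]→ₗ[R] N) (x y : M) :
    β ![-x, y] = -β ![x, y] :=
  congrArg (· ![y]) (map_neg β.curryLeft x)

def wedgeDual {R M : Type*} [CommRing R] [AddCommGroup M] [Module R M] {n : ℕ}
    (f : Fin n → Module.Dual R M) : M [⋀^Fin n]→ₗ[R] R :=
  Matrix.detRowAlternating.compLinearMap (LinearMap.pi f)

lemma wedgeDual_apply {R M : Type*} [CommRing R] [AddCommGroup M] [Module R M] {n : ℕ}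
    (f : Fin n → Module.Dual R M) (v : Fin n → M) :
    wedgeDual f v = (Matrix.of fun i j => f j (v i)).det :=
  rfl

lemma w13_eq_of_antisymm (μ : V6 → ℝ) (α : V6 → V6 → V6 → ℝ)
    (h₁₂ : ∀ x y z, α y x z = -α x y z) (h₂₃ : ∀ x y z, α x z y = -α x y z) (v : Fin 4 → V6) :
    w13 μ α v = μ (v 0) * α (v 1) (v 2) (v 3) - μ (v 1) * α (v 0) (v 2) (v 3)
      + μ (v 2) * α (v 0) (v 1) (v 3) - μ (v 3) * α (v 0) (v 1) (v 2) := by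
  have sort₁₂ : ∀ i j : Fin 4, j < i → ∀ z, α (v i) (v j) z = -α (v j) (v i) z :=
    fun i j _ z => h₁₂ _ _ z
  have sort₂₃ : ∀ i j : Fin 4, j < i → ∀ x, α x (v i) (v j) = -α x (v j) (v i) :=
    fun i j _ x => h₂₃ x _ _
  rw [w13, sum_sign_mul_fin_four (fun a b c d => μ (v a) * α (v b) (v c) (v d))]
  simp (disch := decide) only [sort₁₂, sort₂₃, neg_neg]
  ring

lemma w22_eq_of_antisymm (B C : V6 → V6 → ℝ) (hB : ∀ x y, B y x = -B x y)
    (hC : ∀ x y, C y x = -C x y) (v : Fin 4 → V6) :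
    w22 B C v = B (v 0) (v 1) * C (v 2) (v 3) - B (v 0) (v 2) * C (v 1) (v 3)
      + B (v 0) (v 3) * C (v 1) (v 2) + B (v 1) (v 2) * C (v 0) (v 3)
      - B (v 1) (v 3) * C (v 0) (v 2) + B (v 2) (v 3) * C (v 0) (v 1) := by
  have sortB : ∀ i j : Fin 4, j < i → B (v i) (v j) = -B (v j) (v i) := fun i j _ => hB _ _
  have sortC : ∀ i j : Fin 4, j < i → C (v i) (v j) = -C (v j) (v i) := fun i j _ => hC _ _
  rw [w22, sum_sign_mul_fin_four (fun a b c d => B (v a) (v b) * C (v c) (v d))]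
  simp (disch := decide) only [sortB, sortC]
  ring

lemma I6_eq (x : V6) : I6 x = ![-x 3, -x 4, -x 5, x 0, x 1, x 2] := by
  funext j; fin_cases j <;> rfl

lemma I6_I6 (x : V6) : I6 (I6 x) = -x := by
  funext j; fin_cases j <;> simp [I6_eq]

lemma I6_neg (x : V6) : I6 (-x) = -I6 x := by
  funext j; fin_cases j <;> simp [I6_eq]

lemma I6_e6_zero : I6 (e6 0) = e6 3 := by funext j; fin_cases j <;> simp [I6_eq, e6]
lemma I6_e6_one : I6 (e6 1) = e6 4 := by funext j; fin_cases j <;> simp [I6_eq, e6]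
lemma I6_e6_two : I6 (e6 2) = e6 5 := by funext j; fin_cases j <;> simp [I6_eq, e6]

lemma ψp_swap₁₂ (x y z : V6) : ψp y x z = -ψp x y z := by simp only [ψp, w3]; ring
lemma ψp_swap₂₃ (x y z : V6) : ψp x z y = -ψp x y z := by simp only [ψp, w3]; ring
lemma ψm_swap₁₂ (x y z : V6) : ψm y x z = -ψm x y z := by simp only [ψm, w3]; ring
lemma ψm_swap₂₃ (x y z : V6) : ψm x z y = -ψm x y z := by simp only [ψm, w3]; ring

lemma ω6_swap (x y : V6) : ω6 y x = -ω6 x y := by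
  simp only [ω6, ip6, I6_eq, Fin.sum_univ_six, Matrix.cons_val]; ring

lemma ψp_I6_I6 (x y z : V6) : ψp x (I6 y) (I6 z) = -ψp x y z := by
  simp only [ψp, w3, E, I6_eq, Matrix.cons_val]; ring

lemma w13_ip6_psip (w : V6) : w13 (ip6 w) ψp = w13 (ip6 (I6 w)) ψm := by
  funext v
  rw [w13_eq_of_antisymm _ _ ψp_swap₁₂ ψp_swap₂₃,
    w13_eq_of_antisymm _ _ ψm_swap₁₂ ψm_swap₂₃]
  simp only [ip6, I6_eq, Fin.sum_univ_six, ψp, ψm, w3, E, Matrix.cons_val]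
  ring

lemma w13_ip6_neg_psim (w : V6) : w13 (ip6 (-w)) ψm = w22 (ψp w) ω6 := by
  funext v
  rw [w13_eq_of_antisymm _ _ ψm_swap₁₂ ψm_swap₂₃,
    w22_eq_of_antisymm _ _ (ψp_swap₂₃ w) ω6_swap]
  simp only [ip6, I6_eq, ω6, Fin.sum_univ_six, ψp, ψm, w3, E, Matrix.cons_val, Pi.neg_apply]
  ring

lemma setOf_w13_eq (α : V6 → V6 → V6 → ℝ) :
    {γ : (Fin 4 → V6) → ℝ | ∃ μ : V6 →ₗ[ℝ] ℝ, γ = w13 ⇑μ α} =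
      {γ | ∃ w : V6, γ = w13 (ip6 w) α} := by
  ext γ
  constructor
  · rintro ⟨μ, rfl⟩
    obtain ⟨w, rfl⟩ := (dotProductEquiv ℝ (Fin 6)).surjective μ
    exact ⟨w, rfl⟩
  · rintro ⟨w, rfl⟩
    exact ⟨dotProductEquiv ℝ (Fin 6) w, rfl⟩

def psiPlus : V6 [⋀^Fin 3]→ₗ[ℝ] ℝ :=
  let e : Fin 6 → Module.Dual ℝ V6 := LinearMap.proj
  wedgeDual ![e 0, e 1, e 2] - wedgeDual ![e 3, e 4, e 2] - wedgeDual ![e 3, e 1, e 5]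
    - wedgeDual ![e 0, e 4, e 5]

lemma psiPlus_apply (x y z : V6) : psiPlus ![x, y, z] = ψp x y z := by
  simp only [psiPlus, AlternatingMap.sub_apply, wedgeDual_apply, Matrix.det_fin_three,
    Matrix.of_apply, Matrix.cons_val, LinearMap.coe_proj, Function.eval, ψp, w3, E]
  ring

lemma curryLeft_psiPlus_apply (w : V6) : (fun a b => psiPlus.curryLeft w ![a, b]) = ψp w :=
  funext₂ fun a b => psiPlus_apply w a b

lemma curryLeft_psiPlus_mem_u3perp (w : V6) : psiPlus.curryLeft w ∈ u3perp := fun x y => by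
  simp only [AlternatingMap.curryLeft_apply_apply, psiPlus_apply, ψp_I6_I6]

lemma apply_I6_right_of_mem_u3perp {β : V6 [⋀^Fin 2]→ₗ[ℝ] ℝ} (hβ : β ∈ u3perp)
    (x y : V6) :
    β ![x, I6 y] = -β ![y, I6 x] := by
  have h := hβ (I6 x) y
  rw [I6_I6, β.map_fin_two_neg_left, neg_inj] at h
  rw [h, β.map_fin_two_swap]

lemma basisFun_eq_e6 (i : Fin 6) : Pi.basisFun ℝ (Fin 6) i = e6 i := by
  funext j; simp [e6, Pi.single_apply]

lemma exists_curryLeft_psiPlus_eq {β : V6 [⋀^Fin 2]→ₗ[ℝ] ℝ} (hβ : β ∈ u3perp) :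
    ∃ w, psiPlus.curryLeft w = β := by
  let b := fun i j : Fin 6 => β ![e6 i, e6 j]
  have hI := apply_I6_right_of_mem_u3perp hβ
  have r03 : b 0 3 = 0 := by have := hI (e6 0) (e6 0); rw [I6_e6_zero] at this; linarith
  have r14 : b 1 4 = 0 := by have := hI (e6 1) (e6 1); rw [I6_e6_one] at this; linarith
  have r25 : b 2 5 = 0 := by have := hI (e6 2) (e6 2); rw [I6_e6_two] at this; linarith
  have r13 : b 1 3 = -b 0 4 := by simpa only [I6_e6_zero, I6_e6_one] using hI (e6 1) (e6 0)
  have r23 : b 2 3 = -b 0 5 := by simpa only [I6_e6_zero, I6_e6_two] using hI (e6 2) (e6 0)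
  have r24 : b 2 4 = -b 1 5 := by simpa only [I6_e6_one, I6_e6_two] using hI (e6 2) (e6 1)
  have r34 : b 3 4 = -b 0 1 := by simpa only [I6_e6_zero, I6_e6_one] using hβ (e6 0) (e6 1)
  have r35 : b 3 5 = -b 0 2 := by simpa only [I6_e6_zero, I6_e6_two] using hβ (e6 0) (e6 2)
  have r45 : b 4 5 = -b 1 2 := by simpa only [I6_e6_one, I6_e6_two] using hβ (e6 1) (e6 2)
  have swap : ∀ i j : Fin 6, j < i → b i j = -b j i := fun i j _ => β.map_fin_two_swap _ _
  have diag : ∀ i, b i i = 0 := fun _ => β.map_eq_zero_of_eq (i := 0) (j := 1) _ rfl zero_ne_one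
  refine ⟨![b 1 2, -b 0 2, b 0 1, -b 1 5, b 0 5, -b 0 4], ?_⟩
  refine (Pi.basisFun ℝ (Fin 6)).ext_alternating fun v _ => ?_
  have hv : (fun i => Pi.basisFun ℝ (Fin 6) (v i)) = ![e6 (v 0), e6 (v 1)] := by
    funext i; fin_cases i <;> exact basisFun_eq_e6 _
  rw [hv, AlternatingMap.curryLeft_apply_apply, psiPlus_apply]
  change _ = b (v 0) (v 1)
  generalize v 0 = i, v 1 = j
  fin_cases i <;> fin_cases j <;>
    simp (disch := decide) [ψp, w3, E, e6, swap, diag, r03, r14, r25, r13, r23, r24, r34, r35, r45]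

/-- `{μ ∧ ψ₊}`, `{μ ∧ ψ₋}` and `{β ∧ ω : β ∈ u(3)^⊥}` coincide as subsets of the
alternating 4-forms. -/
theorem wedge_subspaces_coincide :
    {γ : (Fin 4 → V6) → ℝ | ∃ μ : V6 →ₗ[ℝ] ℝ, γ = w13 ⇑μ ψp} =
      {γ : (Fin 4 → V6) → ℝ | ∃ μ : V6 →ₗ[ℝ] ℝ, γ = w13 ⇑μ ψm} ∧
    {γ : (Fin 4 → V6) → ℝ | ∃ μ : V6 →ₗ[ℝ] ℝ, γ = w13 ⇑μ ψm} =
      {γ : (Fin 4 → V6) → ℝ | ∃ β ∈ u3perp, γ = w22 (fun a b => β ![a, b]) ω6} := by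
  rw [setOf_w13_eq, setOf_w13_eq]
  refine ⟨Set.ext fun γ => ⟨?_, ?_⟩, Set.ext fun γ => ⟨?_, ?_⟩⟩
  · rintro ⟨w, rfl⟩
    exact ⟨I6 w, w13_ip6_psip w⟩
  · rintro ⟨w, rfl⟩
    exact ⟨-I6 w, by rw [w13_ip6_psip, I6_neg, I6_I6, neg_neg]⟩
  · rintro ⟨w, rfl⟩
    refine ⟨_, curryLeft_psiPlus_mem_u3perp (-w), ?_⟩
    rw [curryLeft_psiPlus_apply, ← w13_ip6_neg_psim, neg_neg]
  · rintro ⟨β, hβ, rfl⟩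
    obtain ⟨w, rfl⟩ := exists_curryLeft_psiPlus_eq hβ
    exact ⟨-w, by rw [curryLeft_psiPlus_apply, w13_ip6_neg_psim]⟩
end
end

section
/- On ℝ⁷ with the standard G₂ 3-form φ and its Hodge dual ∗φ, for a linear endomorphism A of ℝ⁷ define the alternating 3-form A·φ by (A·φ)(x,y,z) = φ(Ax,y,z) + φ(x,Ay,z) + φ(x,y,Az). Then the image of the space of skew-symmetric endomorphisms of ℝ⁷ under A ↦ A·φ equals the subspace {x ⌟ ∗φ : x ∈ ℝ⁷} of alternating 3-forms. (This realizes the identification g₂^⊥ = {x ⌟ ∗φ : x ∈ ℝ⁷}.) -/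
open scoped BigOperators

noncomputable section

/-- ℝ⁷ as the space of functions `Fin 7 → ℝ` (indices in ℤ/7ℤ). -/
abbrev V7 : Type := Fin 7 → ℝ

/-- The standard inner product on ℝ⁷. -/
def ip7 (x y : V7) : ℝ := ∑ i, x i * y i

/-- The standard orthonormal basis vector `e_i`. -/
def e7 (i : Fin 7) : V7 := fun j => if j = i then 1 else 0

/-- The G₂ fundamental 3-form `φ = ∑_{i∈ℤ/7} eⁱ ∧ e^{i+1} ∧ e^{i+3}`
(each wedge of covectors in the determinant convention). -/
def φ7 (x y z : V7) : ℝ :=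
  ∑ i : Fin 7,
    (x i * y (i + 1) * z (i + 3) - x i * y (i + 3) * z (i + 1)
      - x (i + 1) * y i * z (i + 3) + x (i + 1) * y (i + 3) * z i
      + x (i + 3) * y i * z (i + 1) - x (i + 3) * y (i + 1) * z i)

/-- The 4-form `∗φ = −∑_{i∈ℤ/7} e^{i+2} ∧ e^{i+4} ∧ e^{i+5} ∧ e^{i+6}`. -/
def sφ7 (x y z u : V7) : ℝ :=
  -∑ i : Fin 7,
    Matrix.det !![x (i + 2), x (i + 4), x (i + 5), x (i + 6);
                  y (i + 2), y (i + 4), y (i + 5), y (i + 6);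
                  z (i + 2), z (i + 4), z (i + 5), z (i + 6);
                  u (i + 2), u (i + 4), u (i + 5), u (i + 6)]

/-!
For a skew matrix `A`, `A·φ` depends only on the component of `A` in `so(7) = 𝔤₂ ⊕ ℝ⁷` along
`ℝ⁷`, the vector `v_k = ½ ∑ φ(e_k, e_i, e_j) A_ij`: expanding in coordinates, `A·φ = v ⌟ ∗φ`.
Conversely every `v` arises this way, from the skew matrix `⅓ (v ⌟ φ)`, because
`∑ φ(e_k, e_i, e_j) φ(e_l, e_i, e_j) = 6 δ_kl`.
-/

open Matrix

theorem Matrix.det_fin_four {R : Type*} [CommRing R] (A : Matrix (Fin 4) (Fin 4) R) :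
    A.det =
      A 0 0 * (A 1 1 * A 2 2 * A 3 3 - A 1 1 * A 2 3 * A 3 2 - A 1 2 * A 2 1 * A 3 3
        + A 1 2 * A 2 3 * A 3 1 + A 1 3 * A 2 1 * A 3 2 - A 1 3 * A 2 2 * A 3 1)
      - A 0 1 * (A 1 0 * A 2 2 * A 3 3 - A 1 0 * A 2 3 * A 3 2 - A 1 2 * A 2 0 * A 3 3
        + A 1 2 * A 2 3 * A 3 0 + A 1 3 * A 2 0 * A 3 2 - A 1 3 * A 2 2 * A 3 0)
      + A 0 2 * (A 1 0 * A 2 1 * A 3 3 - A 1 0 * A 2 3 * A 3 1 - A 1 1 * A 2 0 * A 3 3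
        + A 1 1 * A 2 3 * A 3 0 + A 1 3 * A 2 0 * A 3 1 - A 1 3 * A 2 1 * A 3 0)
      - A 0 3 * (A 1 0 * A 2 1 * A 3 2 - A 1 0 * A 2 2 * A 3 1 - A 1 1 * A 2 0 * A 3 2
        + A 1 1 * A 2 2 * A 3 0 + A 1 2 * A 2 0 * A 3 1 - A 1 2 * A 2 1 * A 3 0) := by
  rw [det_succ_row_zero]
  simp only [det_fin_three, submatrix_apply, Fin.sum_univ_succ, Finset.univ_unique,
    Finset.sum_singleton, Fin.default_eq_zero, Fin.succAbove, Fin.succ_zero_eq_one,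
    Fin.succ_one_eq_two, Fin.castSucc_zero, Fin.castSucc_one, Fin.reduceSucc, Fin.reduceCastSucc,
    Fin.val_succ, Fin.val_eq_zero, Fin.coe_ofNat_eq_mod, Nat.zero_mod, Fin.isValue, Fin.reduceEq,
    Fin.reduceLT, Fin.lt_one_iff, Fin.succ_pos, lt_self_iff_false, not_lt_zero, ↓reduceIte,
    zero_add, pow_zero, pow_one, one_mul, neg_mul]
  ring

theorem Matrix.exists_eq_sub_transpose {n R : Type*} [Ring R] [Invertible (2 : R)]
    {M : Matrix n n R} (hM : Mᵀ = -M) : ∃ N : Matrix n n R, M = N - Nᵀ :=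
  ⟨⅟(2 : R) • M, by rw [transpose_smul, hM, smul_neg, sub_neg_eq_add, ← smul_add, ← two_smul R M,
    smul_smul, invOf_mul_self, one_smul]⟩

theorem Matrix.transpose_eq_neg_iff_dotProduct_mulVec {n R : Type*} [Fintype n] [DecidableEq n]
    [CommRing R] (M : Matrix n n R) :
    Mᵀ = -M ↔ ∀ x y : n → R, (M *ᵥ x) ⬝ᵥ y = -(x ⬝ᵥ (M *ᵥ y)) := by
  have h : ∀ x y : n → R, (M *ᵥ x) ⬝ᵥ y = x ⬝ᵥ (Mᵀ *ᵥ y) := fun x y => by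
    rw [dotProduct_mulVec, vecMul_transpose]
  simp_rw [h, ← dotProduct_neg, ← neg_mulVec]
  refine ⟨fun hM x y => by rw [hM], fun hM => ?_⟩
  ext i j
  simpa [mulVec_single_one] using hM (Pi.single i 1) (Pi.single j 1)

theorem φ7_swap (x y z : V7) : φ7 x z y = -φ7 x y z := by
  simp only [φ7, Fin.sum_univ_seven]
  ring

def φContract (M : Matrix (Fin 7) (Fin 7) ℝ) : V7 :=
  fun k => (∑ i, ∑ j, φ7 (e7 k) (e7 i) (e7 j) * M i j) / 2

def φMatrix (v : V7) : Matrix (Fin 7) (Fin 7) ℝ :=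
  of fun i j => φ7 v (e7 i) (e7 j)

theorem φMatrix_transpose (v : V7) : (φMatrix v)ᵀ = -φMatrix v := by
  ext i j
  exact φ7_swap v (e7 i) (e7 j)

theorem φContract_φMatrix (v : V7) : φContract (φMatrix v) = (3 : ℝ) • v := by
  funext k
  fin_cases k <;>
  simp only [φContract, φMatrix, φ7, e7, of_apply, Fin.sum_univ_seven, Finset.sum_sub_distrib,
    Finset.sum_ite_eq', Finset.mem_univ, Fin.zero_eta, Fin.mk_one, Fin.reduceFinMk, Fin.isValue,
    Fin.reduceAdd, Fin.reduceEq, ↓reduceIte, one_ne_zero, zero_ne_one, ite_self, mul_ite, ite_mul,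
    mul_one, one_mul, mul_zero, zero_mul, add_zero, zero_add, sub_zero, zero_sub, sub_self,
    add_eq_right, neg_zero, neg_mul, neg_neg, Pi.smul_apply, smul_eq_mul] <;>
  ring

theorem φContract_smul (c : ℝ) (M : Matrix (Fin 7) (Fin 7) ℝ) :
    φContract (c • M) = c • φContract M := by
  funext k
  simp only [φContract, Matrix.smul_apply, smul_eq_mul, Pi.smul_apply, mul_div_assoc',
    Finset.mul_sum, mul_left_comm c]

theorem exists_skew_φContract_eq (v : V7) :
    ∃ M : Matrix (Fin 7) (Fin 7) ℝ, Mᵀ = -M ∧ φContract M = v :=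
  ⟨(3 : ℝ)⁻¹ • φMatrix v, by rw [transpose_smul, φMatrix_transpose, smul_neg],
    by rw [φContract_smul, φContract_φMatrix, inv_smul_smul₀ three_ne_zero]⟩

theorem φ7_action_eq_sφ7_φContract {M : Matrix (Fin 7) (Fin 7) ℝ} (hM : Mᵀ = -M) (x y z : V7) :
    φ7 (M *ᵥ x) y z + φ7 x (M *ᵥ y) z + φ7 x y (M *ᵥ z) = sφ7 (φContract M) x y z := by
  -- with `M = N - Nᵀ` for a free `N`, the claim becomes a polynomial identity in the entries of `N`
  obtain ⟨N, rfl⟩ := exists_eq_sub_transpose hM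
  simp only [φ7, sφ7, φContract, e7, det_fin_four, mulVec, dotProduct, Matrix.sub_apply,
    transpose_apply, of_apply, cons_val', cons_val_zero, cons_val_fin_one, cons_val_one, cons_val,
    Fin.sum_univ_seven, Finset.sum_sub_distrib, Finset.sum_ite_eq', Finset.mem_univ, Fin.isValue,
    Fin.reduceAdd, Fin.reduceEq, ↓reduceIte, one_ne_zero, zero_ne_one, mul_ite, ite_mul, mul_one,
    one_mul, mul_zero, zero_mul, add_zero, zero_add, sub_zero, zero_sub, sub_self, right_eq_add,
    neg_zero, neg_mul, neg_sub]
  ring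

/-- The image of the skew-symmetric endomorphisms under `A ↦ A·φ` equals
`{x ⌟ ∗φ : x ∈ ℝ⁷}`, where `(A·φ)(x,y,z) = φ(Ax,y,z) + φ(x,Ay,z) + φ(x,y,Az)`. -/
theorem skew_action_image :
    {g : V7 → V7 → V7 → ℝ | ∃ A : V7 →ₗ[ℝ] V7,
        (∀ x y : V7, ip7 (A x) y = -ip7 x (A y)) ∧
        g = fun x y z => φ7 (A x) y z + φ7 x (A y) z + φ7 x y (A z)} =
      {g : V7 → V7 → V7 → ℝ | ∃ x : V7, g = fun a b c => sφ7 x a b c} := by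
  ext g
  constructor
  · rintro ⟨A, hA, rfl⟩
    obtain ⟨M, rfl⟩ := toLin'.surjective A
    have hM : Mᵀ = -M := (transpose_eq_neg_iff_dotProduct_mulVec M).2 hA
    exact ⟨φContract M, funext₃ (φ7_action_eq_sφ7_φContract hM)⟩
  · rintro ⟨v, rfl⟩
    obtain ⟨M, hM, rfl⟩ := exists_skew_φContract_eq v
    refine ⟨toLin' M, (transpose_eq_neg_iff_dotProduct_mulVec M).1 hM, ?_⟩
    exact funext₃ fun x y z => (φ7_action_eq_sφ7_φContract hM x y z).symm
end
end

section
/- On ℝ⁷ with the standard G₂ 3-form φ, its Hodge dual 4-form ∗φ, and associated cross product P, let n ∈ ℝ⁷ be a unit vector. Then for all vectors x, y, z orthogonal to n: ∗φ(n, x, y, z) = −φ(P(n,x), y, z). (This says that on the hyperplane n^⊥, the 3-form ι*(n ⌟ ∗φ) is obtained from ι*φ by applying the almost complex structure I = P(n,·) in one argument, i.e. ψ₋ = I_{(1)}ψ₊ for the induced SU(3)-structure.) -/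
open scoped BigOperators

noncomputable section

/-! The cross product is forced to be `P(x, y)ⱼ = φ(x, y, eⱼ)`, and for it the G₂ contraction
identity `φ(P(a, b), c, d) = ⟨a, c⟩⟨b, d⟩ - ⟨a, d⟩⟨b, c⟩ - ∗φ(a, b, c, d)` holds for all
`a, b, c, d`, by direct expansion in coordinates. For `a = n` and `c, d ⟂ n` both inner-product
terms vanish. -/

theorem Matrix.det_fin_four_of {R : Type*} [CommRing R] (a b c d e f g h i j k l m n o p : R) :
    Matrix.det !![a, b, c, d; e, f, g, h; i, j, k, l; m, n, o, p] =
      a * (f * (k * p - l * o) - g * (j * p - l * n) + h * (j * o - k * n))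
      - b * (e * (k * p - l * o) - g * (i * p - l * m) + h * (i * o - k * m))
      + c * (e * (j * p - l * n) - f * (i * p - l * m) + h * (i * n - j * m))
      - d * (e * (j * o - k * n) - f * (i * o - k * m) + g * (i * n - j * m)) := by
  rw [Matrix.det_succ_row_zero]
  simp [Fin.sum_univ_succ, Matrix.det_fin_three, Fin.succAbove]
  ring

def cross7 (x y : V7) : V7 := fun j => φ7 x y (e7 j)

lemma ip7_e7 (w : V7) (j : Fin 7) : ip7 w (e7 j) = w j := by
  simp [ip7, e7]

lemma eq_cross7 {P : V7 → V7 → V7} (hP : ∀ x y z : V7, ip7 (P x y) z = φ7 x y z) (x y : V7) :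
    P x y = cross7 x y :=
  funext fun j => by rw [← ip7_e7 (P x y), hP, cross7]

lemma φ7_cross7 (a b c d : V7) :
    φ7 (cross7 a b) c d = ip7 a c * ip7 b d - ip7 a d * ip7 b c - sφ7 a b c d := by
  simp only [φ7, cross7, e7, ip7, sφ7, Matrix.det_fin_four_of, Fin.sum_univ_seven, Fin.reduceAdd,
    Fin.reduceEq, if_true, if_false, mul_one, mul_zero, sub_zero, zero_sub, add_zero, zero_add]
  ring

theorem star_phi_interior_normal_general (P : V7 → V7 → V7)
    (hP : ∀ x y z : V7, ip7 (P x y) z = φ7 x y z)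
    (n : V7) :
    ∀ x y z : V7, ip7 n x = 0 → ip7 n y = 0 → ip7 n z = 0 →
      sφ7 n x y z = -φ7 (P n x) y z := by
  intro x y z _ hy hz
  rw [eq_cross7 hP, φ7_cross7, hy, hz]
  ring

/-- For a unit vector `n` and `x, y, z ⟂ n`: `∗φ(n,x,y,z) = −φ(P(n,x),y,z)`. -/
theorem star_phi_interior_normal (P : V7 → V7 → V7)
    (hP : ∀ x y z : V7, ip7 (P x y) z = φ7 x y z)
    (n : V7) (hn : ip7 n n = 1) :
    ∀ x y z : V7, ip7 n x = 0 → ip7 n y = 0 → ip7 n z = 0 →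
      sφ7 n x y z = -φ7 (P n x) y z :=
  star_phi_interior_normal_general P hP n
end
end
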